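/- Let g be C^{k+1} with g ≥ g_min > 0 on an interval I, p > k+1 an integer, and suppose p·h → 0. Then for u, v ∈ I with |u − v| ≤ h, the (k+1)-st derivative satisfies d^{k+1}(g^p)/dx^{k+1}(v) = d^{k+1}(g^p)/dx^{k+1}(u) + Σ_{j=1}^{k+1} [p!/(p−j)!]·g(u)^{p−j}·o(1), where the o(1) terms tend to 0 uniformly as p·h → 0. -/

import Mathlib

open Filter Real

/-!
Differentiating `g ^ p` repeatedly gives `d^(k+1)(g^p) = ∑_{j=1}^{k+1} p!/(p-j)! g^(p-j) φ_j` with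
continuous `φ_j` depending on `g` only. For `|u - v| ≤ h` the ratio `r = g v / g u` satisfies
`|r - 1| ≤ c h` with `c = Lip(g) / g_min`, so `|r^e - 1| ≤ exp (c p h) - 1` for all `e ≤ p`. Writing
`g(v)^(p-j) φ_j(v) - g(u)^(p-j) φ_j(u) = g(u)^(p-j) ((φ_j v - φ_j u) + φ_j v (r^(p-j) - 1))`, each
term is `g(u)^(p-j) · o(1)`: the first summand by uniform continuity of `φ_j` on `[a, b]`, the second
because `p h → 0`. The best constant `ε_n` is then a supremum which tends to zero.
-/

-- `powDerivCoeff g m j` is the `φ_j` of `dᵐ(gᵖ)`; the recursion is the product rule together with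
-- `(p!/(p-j)! g^(p-j))' = p!/(p-j-1)! g^(p-j-1) g'`.
noncomputable def powDerivCoeff (g : ℝ → ℝ) : ℕ → ℕ → ℝ → ℝ
  | 0, 0 => fun _ => 1
  | 0, _ + 1 => fun _ => 0
  | m + 1, 0 => deriv (powDerivCoeff g m 0)
  | m + 1, j + 1 => fun x => deriv (powDerivCoeff g m (j + 1)) x + deriv g x * powDerivCoeff g m j x

namespace powDerivCoeff

variable {g : ℝ → ℝ}

theorem eq_zero_of_lt : ∀ {m j : ℕ}, m < j → powDerivCoeff g m j = 0
  | 0, _ + 1, _ => rfl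
  | m + 1, j + 1, hmj => by
    funext x
    simp [powDerivCoeff, eq_zero_of_lt (m := m) (j := j + 1) (by omega),
      eq_zero_of_lt (m := m) (j := j) (by omega)]

theorem succ_zero : ∀ m : ℕ, powDerivCoeff g (m + 1) 0 = 0
  | 0 => by funext x; simp [powDerivCoeff]
  | m + 1 => by
    show deriv (powDerivCoeff g (m + 1) 0) = 0
    rw [succ_zero m]
    exact deriv_const' 0

theorem contDiff {n m : ℕ} (hg : ContDiff ℝ (n + m) g) (j : ℕ) :
    ContDiff ℝ n (powDerivCoeff g m j) := by
  induction m generalizing n j with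
  | zero => cases j <;> exact contDiff_const
  | succ m ih =>
    have hg' : ContDiff ℝ ((n + 1 : ℕ) + m) g := by convert hg using 1; push_cast; ring
    have hderiv (i : ℕ) : ContDiff ℝ n (deriv (powDerivCoeff g m i)) :=
      (contDiff_succ_iff_deriv.mp (by exact_mod_cast ih hg' i)).2.2
    cases j with
    | zero => exact hderiv 0
    | succ j =>
      have hdg : ContDiff ℝ n (deriv g) :=
        (contDiff_succ_iff_deriv.mp (hg'.of_le (by norm_cast; omega))).2.2
      exact (hderiv (j + 1)).add (hdg.mul ((ih hg' j).of_le (by exact_mod_cast n.le_succ)))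

end powDerivCoeff

theorem hasDerivAt_descFactorial_mul_pow {g : ℝ → ℝ} {x : ℝ} (hg : DifferentiableAt ℝ g x)
    (p j : ℕ) :
    HasDerivAt (fun y => (p.descFactorial j : ℝ) * g y ^ (p - j))
      ((p.descFactorial (j + 1) : ℝ) * g x ^ (p - (j + 1)) * deriv g x) x := by
  refine ((hg.hasDerivAt.fun_pow (p - j)).const_mul (p.descFactorial j : ℝ)).congr_deriv ?_
  rw [Nat.descFactorial_succ, Nat.sub_sub]
  push_cast
  ring

theorem iteratedDeriv_pow_eq_sum {g : ℝ → ℝ} {m : ℕ} (hg : ContDiff ℝ m g) (p : ℕ) (x : ℝ) :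
    iteratedDeriv m (fun t => g t ^ p) x = ∑ j ∈ Finset.range (m + 1),
      (p.descFactorial j : ℝ) * g x ^ (p - j) * powDerivCoeff g m j x := by
  induction m generalizing x with
  | zero => simp [powDerivCoeff]
  | succ m ih =>
    have hφ (j : ℕ) : Differentiable ℝ (powDerivCoeff g m j) :=
      (powDerivCoeff.contDiff (n := 1) (by convert hg using 1; push_cast; ring) j).differentiable
        one_ne_zero
    have hD : HasDerivAt (iteratedDeriv m fun t => g t ^ p)
        (∑ j ∈ Finset.range (m + 1),
          ((p.descFactorial (j + 1) : ℝ) * g x ^ (p - (j + 1)) * (deriv g x * powDerivCoeff g m j x)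
            + (p.descFactorial j : ℝ) * g x ^ (p - j) * deriv (powDerivCoeff g m j) x)) x := by
      rw [funext (ih (hg.of_le (by norm_cast; omega)))]
      exact HasDerivAt.fun_sum fun j _ =>
        (hasDerivAt_descFactorial_mul_pow (hg.differentiable (by simp) x) p j).mul
          (hφ j x).hasDerivAt |>.congr_deriv (by ring)
    rw [iteratedDeriv_succ, hD.deriv, Finset.sum_add_distrib, Finset.sum_range_succ' _ (m + 1),
      Finset.sum_range_succ' (fun j =>
        (p.descFactorial j : ℝ) * g x ^ (p - j) * deriv (powDerivCoeff g m j) x)]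
    simp only [powDerivCoeff, mul_add, Finset.sum_add_distrib]
    rw [Finset.sum_range_succ (fun j => (p.descFactorial (j + 1) : ℝ) * g x ^ (p - (j + 1)) *
      deriv (powDerivCoeff g m (j + 1)) x), powDerivCoeff.eq_zero_of_lt (Nat.lt_succ_self m)]
    simp only [deriv_const', Pi.zero_def]
    ring

noncomputable def descFactorialPowSum (m p : ℕ) (y : ℝ) : ℝ :=
  ∑ j ∈ Finset.Icc 1 (m + 1), (p.descFactorial j : ℝ) * y ^ (p - j)

theorem descFactorialPowSum_nonneg (m p : ℕ) {y : ℝ} (hy : 0 ≤ y) :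
    0 ≤ descFactorialPowSum m p y :=
  Finset.sum_nonneg fun _ _ => by positivity

theorem descFactorialPowSum_pos (m : ℕ) {p : ℕ} (hp : 0 < p) {y : ℝ} (hy : 0 < y) :
    0 < descFactorialPowSum m p y :=
  Finset.sum_pos' (fun _ _ => by positivity)
    ⟨1, by simp, by simpa [Nat.descFactorial_one] using mul_pos (Nat.cast_pos.2 hp) (pow_pos hy _)⟩

theorem iteratedDeriv_succ_pow_eq_sum {g : ℝ → ℝ} {m : ℕ} (hg : ContDiff ℝ (m + 1) g) (p : ℕ)
    (x : ℝ) :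
    iteratedDeriv (m + 1) (fun t => g t ^ p) x = ∑ j ∈ Finset.Icc 1 (m + 1),
      (p.descFactorial j : ℝ) * g x ^ (p - j) * powDerivCoeff g (m + 1) j x := by
  rw [iteratedDeriv_pow_eq_sum (by exact_mod_cast hg), Finset.range_eq_Ico,
    Finset.sum_eq_sum_Ico_succ_bot (by omega), ← Finset.Ico_add_one_right_eq_Icc,
    powDerivCoeff.succ_zero]
  simp

theorem abs_pow_sub_one_le_exp {r x : ℝ} (hr : 0 ≤ r) (hx : |r - 1| ≤ x) (e : ℕ) :
    |r ^ e - 1| ≤ exp (e * x) - 1 := by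
  have hx0 : 0 ≤ x := (abs_nonneg _).trans hx
  rw [abs_le] at hx ⊢
  constructor
  · have hbern : 1 + e * (r - 1) ≤ r ^ e := by
      simpa using one_add_mul_le_pow (a := r - 1) (by linarith) e
    have : -(e * x) ≤ e * (r - 1) := by nlinarith [(e.cast_nonneg : (0 : ℝ) ≤ e)]
    linarith [add_one_le_exp (e * x)]
  · calc r ^ e - 1 ≤ (1 + x) ^ e - 1 := by gcongr; linarith
      _ ≤ exp x ^ e - 1 := by gcongr; linarith [add_one_le_exp x]
      _ = exp (e * x) - 1 := by rw [exp_nat_mul]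

theorem abs_mul_pow_mul_sub_le {A y z φy φz x θ M : ℝ} (hA : 0 ≤ A) (hy : 0 < y) (hz : 0 ≤ z)
    (hx : |z / y - 1| ≤ x) (hθ : |φz - φy| ≤ θ) (hM : |φz| ≤ M) (e : ℕ) :
    |A * z ^ e * φz - A * y ^ e * φy| ≤ A * y ^ e * (θ + M * (exp (e * x) - 1)) := by
  have hsplit : A * z ^ e * φz - A * y ^ e * φy
      = A * y ^ e * ((φz - φy) + φz * ((z / y) ^ e - 1)) := by
    rw [div_pow]
    field_simp
    ring
  rw [hsplit, abs_mul, abs_of_nonneg (by positivity)]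
  gcongr
  calc |φz - φy + φz * ((z / y) ^ e - 1)| ≤ |φz - φy| + |φz| * |(z / y) ^ e - 1| :=
        (abs_add_le _ _).trans_eq (by rw [abs_mul])
    _ ≤ θ + M * (exp (e * x) - 1) := by
        gcongr
        · exact (abs_nonneg _).trans hM
        · exact abs_pow_sub_one_le_exp (by positivity) hx e

theorem abs_iteratedDeriv_pow_sub_le {g : ℝ → ℝ} {m : ℕ} (hg : ContDiff ℝ (m + 1) g) (p : ℕ)
    {u v x θ M : ℝ} (hu : 0 < g u) (hv : 0 ≤ g v) (hx : |g v / g u - 1| ≤ x)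
    (hθ : ∀ j ∈ Finset.Icc 1 (m + 1),
      |powDerivCoeff g (m + 1) j v - powDerivCoeff g (m + 1) j u| ≤ θ)
    (hM : ∀ j ∈ Finset.Icc 1 (m + 1), |powDerivCoeff g (m + 1) j v| ≤ M) :
    |iteratedDeriv (m + 1) (fun t => g t ^ p) v - iteratedDeriv (m + 1) (fun t => g t ^ p) u|
      ≤ (θ + M * (exp (p * x) - 1)) * descFactorialPowSum m p (g u) := by
  have hx0 : 0 ≤ x := (abs_nonneg _).trans hx
  rw [iteratedDeriv_succ_pow_eq_sum hg, iteratedDeriv_succ_pow_eq_sum hg,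
    ← Finset.sum_sub_distrib, descFactorialPowSum, Finset.mul_sum]
  refine (Finset.abs_sum_le_sum_abs _ _).trans (Finset.sum_le_sum fun j hj => ?_)
  have hM0 : 0 ≤ M := (abs_nonneg _).trans (hM j hj)
  calc _ ≤ (p.descFactorial j : ℝ) * g u ^ (p - j) * (θ + M * (exp ((p - j : ℕ) * x) - 1)) :=
        abs_mul_pow_mul_sub_le (by positivity) hu hv hx (hθ j hj) (hM j hj) _
    _ ≤ _ := by
        rw [mul_comm]
        gcongr
        exact_mod_cast p.sub_le j

theorem exists_tendsto_zero_forall_le_mul {X : Type*} {K : ℕ → Set X} {f w : ℕ → X → ℝ}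
    (hw : ∀ n, ∀ q ∈ K n, 0 < w n q) (hbdd : ∀ n, ∃ C, ∀ q ∈ K n, f n q ≤ C * w n q)
    (hsmall : ∀ δ > 0, ∀ᶠ n in atTop, ∀ q ∈ K n, f n q ≤ δ * w n q) :
    ∃ ε : ℕ → ℝ, Tendsto ε atTop (nhds 0) ∧ ∀ n, ∀ q ∈ K n, f n q ≤ ε n * w n q := by
  set ratio : ℕ → Set ℝ := fun n => (fun q => f n q / w n q) '' K n
  have hratio_le {n : ℕ} {C : ℝ} (hC : ∀ q ∈ K n, f n q ≤ C * w n q) : ∀ r ∈ ratio n, r ≤ C := by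
    rintro _ ⟨q, hq, rfl⟩
    exact (div_le_iff₀ (hw n q hq)).2 (hC q hq)
  refine ⟨fun n => max 0 (sSup (ratio n)), ?_, fun n q hq => ?_⟩
  · refine tendsto_order.2 ⟨fun δ hδ => .of_forall fun n => hδ.trans_le (le_max_left _ _),
      fun δ hδ => (hsmall (δ / 2) (by positivity)).mono fun n hn => ?_⟩
    exact (max_le (by positivity) (Real.sSup_le (hratio_le hn) (by positivity))).trans_lt
      (by linarith)
  · obtain ⟨C, hC⟩ := hbdd n
    have hq_le := le_csSup ⟨C, hratio_le hC⟩ ⟨q, hq, rfl⟩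
    exact (div_le_iff₀ (hw n q hq)).1 (hq_le.trans (le_max_right _ _))

theorem IsCompact.exists_forall_dist_lt_of_continuousOn {α β ι : Type*} [PseudoMetricSpace α]
    [PseudoMetricSpace β] {K : Set α} (hK : IsCompact K) (s : Finset ι) {φ : ι → α → β}
    (hφ : ∀ j ∈ s, ContinuousOn (φ j) K) {δ : ℝ} (hδ : 0 < δ) :
    ∃ η > 0, ∀ j ∈ s, ∀ u ∈ K, ∀ v ∈ K, dist u v < η → dist (φ j u) (φ j v) < δ := by
  have hΦ : ContinuousOn (fun x (j : s) => φ j x) K := continuousOn_pi.2 fun j => hφ j j.2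
  obtain ⟨η, hη, hclose⟩ :=
    Metric.uniformContinuousOn_iff.1 (hK.uniformContinuousOn_of_continuous hΦ) δ hδ
  exact ⟨η, hη, fun j hj u hu v hv huv =>
    (dist_le_pi_dist _ _ (⟨j, hj⟩ : s)).trans_lt (hclose u hu v hv huv)⟩

theorem IsCompact.exists_forall_norm_le_of_continuousOn {α E ι : Type*} [TopologicalSpace α]
    [SeminormedAddCommGroup E] {K : Set α} (hK : IsCompact K) (s : Finset ι) {φ : ι → α → E}
    (hφ : ∀ j ∈ s, ContinuousOn (φ j) K) :
    ∃ M, ∀ j ∈ s, ∀ x ∈ K, ‖φ j x‖ ≤ M := by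
  obtain ⟨M, hM⟩ :=
    hK.exists_bound_of_continuousOn (continuousOn_pi.2 fun (j : s) => hφ j j.2)
  exact ⟨M, fun j hj x hx => (norm_le_pi_norm (fun (i : s) => φ i x) ⟨j, hj⟩).trans (hM x hx)⟩

theorem LipschitzOnWith.abs_div_sub_one_le {g : ℝ → ℝ} {s : Set ℝ} {L : NNReal}
    (hg : LipschitzOnWith L g s) {g_min : ℝ} (hmin : 0 < g_min) (hbelow : ∀ t ∈ s, g_min ≤ g t)
    {u v : ℝ} (hu : u ∈ s) (hv : v ∈ s) :
    |g v / g u - 1| ≤ L / g_min * |v - u| := by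
  have hgu : 0 < g u := hmin.trans_le (hbelow u hu)
  rw [div_sub_one hgu.ne', abs_div, abs_of_pos hgu, div_le_iff₀ hgu]
  calc |g v - g u| ≤ L * |v - u| := by simpa [Real.dist_eq] using hg.dist_le_mul v hv u hu
    _ = L / g_min * |v - u| * g_min := by field_simp
    _ ≤ L / g_min * |v - u| * g u := by gcongr; exact hbelow u hu

theorem exists_abs_iteratedDeriv_pow_sub_le {g : ℝ → ℝ} {m : ℕ} (hg : ContDiff ℝ (m + 1) g)
    {s : Set ℝ} (hs : IsCompact s) (hs' : Convex ℝ s) {g_min : ℝ} (hmin : 0 < g_min)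
    (hbelow : ∀ t ∈ s, g_min ≤ g t) :
    ∃ c M : ℝ,
      (∀ (p : ℕ) (r : ℝ), ∀ u ∈ s, ∀ v ∈ s, |u - v| ≤ r →
        |iteratedDeriv (m + 1) (fun t => g t ^ p) v - iteratedDeriv (m + 1) (fun t => g t ^ p) u|
          ≤ M * (exp (c * (p * r)) + 1) * descFactorialPowSum m p (g u)) ∧
      ∀ δ > 0, ∃ η > 0, ∀ (p : ℕ) (r : ℝ), ∀ u ∈ s, ∀ v ∈ s, |u - v| < η → |u - v| ≤ r →
        |iteratedDeriv (m + 1) (fun t => g t ^ p) v - iteratedDeriv (m + 1) (fun t => g t ^ p) u|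
          ≤ (δ + M * (exp (c * (p * r)) - 1)) * descFactorialPowSum m p (g u) := by
  set φ := powDerivCoeff g (m + 1)
  obtain ⟨L, hL⟩ := hg.contDiffOn.exists_lipschitzOnWith (by simp) hs' hs
  have hφ (j : ℕ) : ContinuousOn (φ j) s :=
    (powDerivCoeff.contDiff (n := 0) (by simpa using hg) j).continuous.continuousOn
  obtain ⟨M, hM⟩ := hs.exists_forall_norm_le_of_continuousOn (Finset.Icc 1 (m + 1)) fun j _ => hφ j
  simp only [Real.norm_eq_abs] at hM
  have key (p : ℕ) {r u v θ : ℝ} (hu : u ∈ s) (hv : v ∈ s) (huv : |u - v| ≤ r)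
      (hθ : ∀ j ∈ Finset.Icc 1 (m + 1), |φ j v - φ j u| ≤ θ) :
      |iteratedDeriv (m + 1) (fun t => g t ^ p) v - iteratedDeriv (m + 1) (fun t => g t ^ p) u|
        ≤ (θ + M * (exp (L / g_min * (p * r)) - 1)) * descFactorialPowSum m p (g u) := by
    have hM0 : 0 ≤ M := (abs_nonneg _).trans (hM 1 (by simp) u hu)
    have hgu : 0 < g u := hmin.trans_le (hbelow u hu)
    refine (abs_iteratedDeriv_pow_sub_le hg p hgu (hmin.le.trans (hbelow v hv))
      (hL.abs_div_sub_one_le hmin hbelow hu hv) hθ (hM · · v hv)).trans ?_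
    have hexp : (p : ℝ) * (L / g_min * |v - u|) ≤ L / g_min * (p * r) := by
      rw [abs_sub_comm, mul_left_comm]
      gcongr
    gcongr
    exact descFactorialPowSum_nonneg m p hgu.le
  refine ⟨L / g_min, M, fun p r u hu v hv huv => ?_, fun δ hδ => ?_⟩
  · refine (key p (θ := 2 * M) hu hv huv fun j hj => (abs_sub _ _).trans ?_).trans_eq (by ring)
    linarith [hM j hj v hv, hM j hj u hu]
  · obtain ⟨η, hη, hclose⟩ :=
      hs.exists_forall_dist_lt_of_continuousOn (Finset.Icc 1 (m + 1)) (fun j _ => hφ j) hδ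
    refine ⟨η, hη, fun p r u hu v hv hη' huv => key p hu hv huv fun j hj => ?_⟩
    exact (hclose j hj v hv u hu (by rwa [Real.dist_eq, abs_sub_comm])).le

theorem stmt_8_general (k : ℕ) (g : ℝ → ℝ) (hg : ContDiff ℝ (k + 1) g)
    (g_min : ℝ) (hmin : 0 < g_min) (hbelow : ∀ t, g_min ≤ g t)
    (a b : ℝ)
    (p : ℕ → ℕ) (h : ℕ → ℝ)
    (hp_large : ∀ n, k + 1 < p n)
    (hph : Tendsto (fun n => (p n : ℝ) * h n) atTop (nhds 0)) :
    ∃ ε : ℕ → ℝ, Tendsto ε atTop (nhds 0) ∧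
      ∀ n, ∀ u ∈ Set.Icc a b, ∀ v ∈ Set.Icc a b, |u - v| ≤ h n →
        |iteratedDeriv (k + 1) (fun t => g t ^ p n) v
            - iteratedDeriv (k + 1) (fun t => g t ^ p n) u|
          ≤ ε n * ∑ j ∈ Finset.Icc 1 (k + 1),
              ((p n).descFactorial j : ℝ) * g u ^ (p n - j) := by
  obtain ⟨c, M, hbdd, hsmall⟩ := exists_abs_iteratedDeriv_pow_sub_le (by exact_mod_cast hg)
    isCompact_Icc (convex_Icc a b) hmin fun t _ => hbelow t
  have hp1 (n : ℕ) : (1 : ℝ) ≤ p n := by exact_mod_cast (by have := hp_large n; omega : 1 ≤ p n)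
  have hS (n : ℕ) (u : ℝ) : 0 < descFactorialPowSum k (p n) (g u) :=
    descFactorialPowSum_pos k (by exact_mod_cast zero_lt_one.trans_le (hp1 n))
      (hmin.trans_le (hbelow u))
  have hexp : Tendsto (fun n => M * (exp (c * (p n * h n)) - 1)) atTop (nhds 0) := by
    simpa using ((hph.const_mul c).rexp.sub_const 1).const_mul M
  obtain ⟨ε, hε, hbound⟩ := exists_tendsto_zero_forall_le_mul
    (K := fun n => {q : ℝ × ℝ | q.1 ∈ Set.Icc a b ∧ q.2 ∈ Set.Icc a b ∧ |q.1 - q.2| ≤ h n})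
    (fun n q _ => hS n q.1)
    (fun n => ⟨_, fun q ⟨hu, hv, huv⟩ => hbdd (p n) (h n) _ hu _ hv huv⟩)
    (fun δ hδ => by
      obtain ⟨η, hη, hclose⟩ := hsmall (δ / 2) (half_pos hδ)
      filter_upwards [hph.eventually_lt_const hη, hexp.eventually_lt_const (half_pos hδ)]
        with n hph_lt hexp_lt
      rintro ⟨u, v⟩ ⟨hu, hv, huv⟩
      refine (hclose (p n) (h n) u hu v hv ?_ huv).trans
        (mul_le_mul_of_nonneg_right (by linarith) (hS n u).le)
      exact huv.trans_lt
        ((le_mul_of_one_le_left ((abs_nonneg _).trans huv) (hp1 n)).trans_lt hph_lt))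
  exact ⟨ε, hε, fun n u hu v hv huv => hbound n (u, v) ⟨hu, hv, huv⟩⟩

theorem stmt_8 (k : ℕ) (g : ℝ → ℝ) (hg : ContDiff ℝ (k + 1) g)
    (g_min : ℝ) (hmin : 0 < g_min) (hbelow : ∀ t, g_min ≤ g t)
    (a b : ℝ) (hab : a < b)
    (p : ℕ → ℕ) (h : ℕ → ℝ) (hh_pos : ∀ n, 0 < h n)
    (hp_large : ∀ n, k + 1 < p n)
    (hph : Tendsto (fun n => (p n : ℝ) * h n) atTop (nhds 0)) :
    ∃ ε : ℕ → ℝ, Tendsto ε atTop (nhds 0) ∧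
      ∀ n, ∀ u ∈ Set.Icc a b, ∀ v ∈ Set.Icc a b, |u - v| ≤ h n →
        |iteratedDeriv (k + 1) (fun t => g t ^ p n) v
            - iteratedDeriv (k + 1) (fun t => g t ^ p n) u|
          ≤ ε n * ∑ j ∈ Finset.Icc 1 (k + 1),
              ((p n).descFactorial j : ℝ) * g u ^ (p n - j) :=
  stmt_8_general k g hg g_min hmin hbelow a b p h hp_large hph
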